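/- Two circle subgroups G(a₁) and G(a₂) of the torus T^k, where aᵢ ∈ ℤ^k are primitive integer vectors and G(a) is the image of the line ℝ·a under the covering projection ℝ^k → T^k = ℝ^k/ℤ^k, intersect trivially if and only if there exist vectors a₃, …, a_k ∈ ℤ^k such that the k×k integer matrix with columns a₁, …, a_k has determinant ±1. -/

import Mathlib

/-!
Pairing with an integer covector `c` is a homomorphism `T^k → ℝ/ℤ` sending `π(t·a)` to
`t (c·a) mod 1`. If `c·a₁ = 1` and `c·a₂ = 0`, a common point `π(t·a₁) = π(s·a₂)` therefore has
`t ∈ ℤ`, so it is `0`; such a `c` is a row of the inverse of a unimodular extension.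

Conversely, if `G(a₁) ⊓ G(a₂) = ⊥` and `m a₁ + l a₂ = n x` with `x ∈ ℤ^k`, `n ≠ 0`, then
`π((m/n)·a₁) = π((-l/n)·a₂)` is a common point, hence `0`, and primitivity of `a₁` (Bézout) forces
`n ∣ m`; likewise `n ∣ l`. So `a₁, a₂` are independent and `ℤ^k ⧸ ⟨a₁, a₂⟩` is torsion-free, hence
free; then `⟨a₁, a₂⟩` is a direct summand and `a₁, a₂` extend to a basis of `ℤ^k`.
-/

/-- The `k`-torus `T^k = ℝ^k/ℤ^k`, realized coordinatewise. -/
abbrev Torus (k : ℕ) : Type := Fin k → AddCircle (1 : ℝ)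

/-- The additive homomorphism `ℝ → T^k`, `t ↦ π(t·a)`, whose range is the
circle subgroup `G(a)` determined by the integer vector `a`. -/
noncomputable def circleHom {k : ℕ} (a : Fin k → ℤ) : ℝ →+ Torus k :=
  AddMonoidHom.mk' (fun t i => ((t * (a i : ℝ) : ℝ) : AddCircle (1 : ℝ)))
    (fun u v => by
      funext i
      show (((u + v) * (a i : ℝ) : ℝ) : AddCircle (1 : ℝ)) = _
      rw [add_mul]; rfl)

/-- The circle subgroup `G(a) ⊆ T^k`: the image of the line `ℝ·a` under the
covering projection `ℝ^k → T^k`. -/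
noncomputable def circleSubgroup {k : ℕ} (a : Fin k → ℤ) : AddSubgroup (Torus k) :=
  (circleHom a).range

open Matrix

section Torus

variable {k : ℕ}

lemma circleHom_apply (a : Fin k → ℤ) (t : ℝ) (i : Fin k) :
    circleHom a t i = ((t * a i : ℝ) : AddCircle (1 : ℝ)) :=
  rfl

lemma AddCircle.coe_intCast_eq_zero {𝕜 : Type*} [Ring 𝕜] (n : ℤ) :
    ((n : 𝕜) : AddCircle (1 : 𝕜)) = 0 :=
  (AddCircle.coe_eq_zero_iff 1).mpr ⟨n, by simp⟩

lemma circleHom_intCast (a : Fin k → ℤ) (n : ℤ) : circleHom a n = 0 := by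
  funext i
  rw [circleHom_apply, ← Int.cast_mul]
  exact AddCircle.coe_intCast_eq_zero _

lemma sum_zsmul_circleHom (c a : Fin k → ℤ) (t : ℝ) :
    ∑ i, c i • circleHom a t i = ((t * (c ⬝ᵥ a : ℤ) : ℝ) : AddCircle (1 : ℝ)) := by
  have hmk : ∀ x : ℝ, (x : AddCircle (1 : ℝ)) = QuotientAddGroup.mk' _ x := fun _ => rfl
  simp only [circleHom_apply, hmk, ← map_zsmul, ← map_sum]
  congr 1
  simp only [dotProduct, zsmul_eq_mul, Int.cast_sum, Int.cast_mul, Finset.mul_sum]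
  exact Finset.sum_congr rfl fun i _ => by ring

lemma exists_intCast_eq_of_circleHom_eq {a b c : Fin k → ℤ} (ha : c ⬝ᵥ a = 1) (hb : c ⬝ᵥ b = 0)
    {t s : ℝ} (h : circleHom a t = circleHom b s) : ∃ n : ℤ, (n : ℝ) = t := by
  have hc := congrArg (fun x : Torus k => ∑ i, c i • x i) h
  simp only [sum_zsmul_circleHom, ha, hb, Int.cast_one, Int.cast_zero, mul_one, mul_zero,
    AddCircle.coe_zero] at hc
  obtain ⟨n, hn⟩ := (AddCircle.coe_eq_zero_iff 1).mp hc
  exact ⟨n, by simpa using hn⟩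

lemma exists_intCast_eq_of_circleHom_eq_zero {a : Fin k → ℤ} (ha : Finset.univ.gcd a = 1)
    {t : ℝ} (h : circleHom a t = 0) : ∃ n : ℤ, (n : ℝ) = t := by
  obtain ⟨c, hc⟩ := Finset.univ.gcd_eq_sum_mul a
  refine exists_intCast_eq_of_circleHom_eq (b := 0) (s := 0) (c := c) ?_ (dotProduct_zero c)
    (h.trans (map_zero _).symm)
  rw [dotProduct_comm, dotProduct, ← hc, ha]

lemma circleSubgroup_inf_eq_bot_of_dotProduct_eq {a b c : Fin k → ℤ} (ha : c ⬝ᵥ a = 1)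
    (hb : c ⬝ᵥ b = 0) : circleSubgroup a ⊓ circleSubgroup b = ⊥ := by
  rw [eq_bot_iff]
  rintro _ ⟨⟨t, rfl⟩, s, hs⟩
  obtain ⟨n, rfl⟩ := exists_intCast_eq_of_circleHom_eq ha hb hs.symm
  exact AddSubgroup.mem_bot.mpr (circleHom_intCast a n)

lemma circleHom_eq_zero_of_inf_eq_bot {a b : Fin k → ℤ}
    (h : circleSubgroup a ⊓ circleSubgroup b = ⊥) {t s : ℝ} (hts : circleHom a t = circleHom b s) :
    circleHom a t = 0 := by
  have hmem : circleHom a t ∈ circleSubgroup a ⊓ circleSubgroup b := ⟨⟨t, rfl⟩, s, hts.symm⟩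
  rwa [h, AddSubgroup.mem_bot] at hmem

end Torus

section Lattice

variable {k : ℕ} {a b : Fin k → ℤ}

lemma dvd_of_smul_add_smul_eq_smul (h : circleSubgroup a ⊓ circleSubgroup b = ⊥)
    (ha : Finset.univ.gcd a = 1) {m l n : ℤ} {x : Fin k → ℤ} (hn : n ≠ 0)
    (hx : m • a + l • b = n • x) : n ∣ m := by
  have hnR : (n : ℝ) ≠ 0 := Int.cast_ne_zero.mpr hn
  have hts : circleHom a (m / n) = circleHom b (-l / n) := by
    funext i
    have hxi : (m * a i + l * b i : ℝ) = n * x i := by exact_mod_cast congrFun hx i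
    have hsplit : (m / n * a i : ℝ) = -l / n * b i + (x i : ℤ) := by
      field_simp
      linarith
    rw [circleHom_apply, circleHom_apply, hsplit, AddCircle.coe_add,
      AddCircle.coe_intCast_eq_zero, add_zero]
  obtain ⟨q, hq⟩ :=
    exists_intCast_eq_of_circleHom_eq_zero ha (circleHom_eq_zero_of_inf_eq_bot h hts)
  refine ⟨q, ?_⟩
  rw [eq_div_iff hnR] at hq
  exact_mod_cast (hq.symm.trans (mul_comm _ _))

lemma eq_zero_of_smul_add_smul_eq_zero (h : circleSubgroup a ⊓ circleSubgroup b = ⊥)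
    (ha : Finset.univ.gcd a = 1) {m l : ℤ} (hml : m • a + l • b = 0) : m = 0 := by
  by_contra hm
  have hdvd : 2 * m ∣ m :=
    dvd_of_smul_add_smul_eq_smul h ha (x := 0) (mul_ne_zero two_ne_zero hm) (by rw [hml, smul_zero])
  have hpos := Int.natAbs_pos.mpr hm
  exact hm (Int.eq_zero_of_dvd_of_natAbs_lt_natAbs hdvd (by rw [Int.natAbs_mul]; norm_num; omega))

lemma linearIndependent_of_inf_eq_bot (h : circleSubgroup a ⊓ circleSubgroup b = ⊥)
    (ha : Finset.univ.gcd a = 1) (hb : Finset.univ.gcd b = 1) : LinearIndependent ℤ ![a, b] := by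
  have h' : circleSubgroup b ⊓ circleSubgroup a = ⊥ := by rwa [inf_comm]
  refine LinearIndependent.pair_iff.mpr fun m l hml =>
    ⟨eq_zero_of_smul_add_smul_eq_zero h ha hml, eq_zero_of_smul_add_smul_eq_zero h' hb (l := m) ?_⟩
  rwa [add_comm]

lemma isTorsionFree_quotient_span_pair (h : circleSubgroup a ⊓ circleSubgroup b = ⊥)
    (ha : Finset.univ.gcd a = 1) (hb : Finset.univ.gcd b = 1) :
    Module.IsTorsionFree ℤ ((Fin k → ℤ) ⧸ Submodule.span ℤ (Set.range ![a, b])) := by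
  have h' : circleSubgroup b ⊓ circleSubgroup a = ⊥ := by rwa [inf_comm]
  refine .of_smul_eq_zero fun n q hnq => or_iff_not_imp_left.mpr fun hn => ?_
  obtain ⟨x, rfl⟩ := Submodule.mkQ_surjective _ q
  rw [← map_smul, Submodule.mkQ_apply, Submodule.Quotient.mk_eq_zero,
    Matrix.range_cons_cons_empty, Submodule.mem_span_pair] at hnq
  rw [Submodule.mkQ_apply, Submodule.Quotient.mk_eq_zero, Matrix.range_cons_cons_empty,
    Submodule.mem_span_pair]
  obtain ⟨m, l, hx⟩ := hnq
  obtain ⟨m', rfl⟩ := dvd_of_smul_add_smul_eq_smul h ha hn hx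
  obtain ⟨l', rfl⟩ := dvd_of_smul_add_smul_eq_smul h' hb hn (by rwa [add_comm])
  refine ⟨m', l', smul_right_injective _ hn ?_⟩
  simpa only [smul_add, mul_smul] using hx

end Lattice

lemma Submodule.exists_basis_sum_inl_eq {R M κ : Type*} [Ring R] [AddCommGroup M] [Module R M]
    (p : Submodule R M) [Module.Free R (M ⧸ p)] (b : Module.Basis κ R p) :
    ∃ c : Module.Basis (κ ⊕ Module.Free.ChooseBasisIndex R (M ⧸ p)) R M,
      ∀ i, c (.inl i) = b i := by
  obtain ⟨l, hl⟩ := Module.projective_lifting_property p.mkQ LinearMap.id p.mkQ_surjective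
  let e := (LinearMap.exact_subtype_mkQ p).splitSurjectiveEquiv p.injective_subtype ⟨l, hl⟩
  have he : p.subtype = e.1.symm ∘ₗ LinearMap.inl R p (M ⧸ p) := e.2.1
  refine ⟨(b.prod (Module.Free.chooseBasis R (M ⧸ p))).map e.1.symm, fun i => ?_⟩
  simpa using (LinearMap.congr_fun he (b i)).symm

lemma Fin.exists_sumEquiv_inl_eq_castLE {m n : ℕ} (hmn : m ≤ n) {σ : Type*}
    (e : Fin m ⊕ σ ≃ Fin n) : ∃ e' : Fin m ⊕ σ ≃ Fin n, ∀ j, e' (.inl j) = Fin.castLE hmn j := by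
  have : Finite σ := .of_injective (e ∘ .inr) (e.injective.comp Sum.inr_injective)
  have : Fintype σ := Fintype.ofFinite σ
  have hσ : Fintype.card σ = n - m := by
    have := Fintype.card_congr e
    simp only [Fintype.card_sum, Fintype.card_fin] at this
    omega
  refine ⟨(Equiv.sumCongr (Equiv.refl _) (Fintype.equivFinOfCardEq hσ)).trans
    (finSumFinEquiv.trans (finCongr (by omega))), fun j => ?_⟩
  ext
  simp

lemma Module.Basis.exists_matrix_isUnit_det_and_col_eq {R : Type*} [CommRing R] [Nontrivial R]
    {k m : ℕ} (hmk : m ≤ k) {σ : Type*} (c : Module.Basis (Fin m ⊕ σ) R (Fin k → R)) :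
    ∃ A : Matrix (Fin k) (Fin k) R,
      IsUnit A.det ∧ ∀ j i, A i (Fin.castLE hmk j) = c (.inl j) i := by
  obtain ⟨e, he⟩ := Fin.exists_sumEquiv_inl_eq_castLE hmk (c.indexEquiv (Pi.basisFun R (Fin k)))
  refine ⟨(Pi.basisFun R (Fin k)).toMatrix (c.reindex e), ?_, fun j i => ?_⟩
  · rw [← Module.Basis.det_apply]
    exact Module.Basis.isUnit_det _ _
  · rw [Module.Basis.toMatrix_apply, Pi.basisFun_repr, ← he, Module.Basis.reindex_apply,
      Equiv.symm_apply_apply]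

lemma Matrix.exists_dotProduct_col_eq_one_and_eq_zero {R n : Type*} [CommRing R] [Fintype n]
    [DecidableEq n] {A : Matrix n n R} (hA : IsUnit A.det) {j₀ j₁ : n} (hj : j₀ ≠ j₁) :
    ∃ c : n → R, c ⬝ᵥ (fun i => A i j₀) = 1 ∧ c ⬝ᵥ (fun i => A i j₁) = 0 := by
  have hinv := Matrix.nonsing_inv_mul A hA
  refine ⟨A⁻¹ j₀, ?_, ?_⟩
  · simpa [Matrix.mul_apply'] using congrFun (congrFun hinv j₀) j₀
  · simpa [Matrix.mul_apply', hj] using congrFun (congrFun hinv j₀) j₁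

lemma exists_unimodular_of_circleSubgroup_inf_eq_bot {k : ℕ} (hk : 2 ≤ k) {a b : Fin k → ℤ}
    (h : circleSubgroup a ⊓ circleSubgroup b = ⊥)
    (ha : Finset.univ.gcd a = 1) (hb : Finset.univ.gcd b = 1) :
    ∃ A : Matrix (Fin k) (Fin k) ℤ, IsUnit A.det ∧
      (∀ i, A i (Fin.castLE hk 0) = a i) ∧ (∀ i, A i (Fin.castLE hk 1) = b i) := by
  have := isTorsionFree_quotient_span_pair h ha hb
  obtain ⟨c, hc⟩ := Submodule.exists_basis_sum_inl_eq _
    (Module.Basis.span (linearIndependent_of_inf_eq_bot h ha hb))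
  obtain ⟨A, hA, hcol⟩ := c.exists_matrix_isUnit_det_and_col_eq hk
  refine ⟨A, hA, fun i => ?_, fun i => ?_⟩ <;> simp [hcol, hc, Module.Basis.span_apply]

/-- two circle subgroups `G(a₁)`, `G(a₂)` of `T^k` determined by
primitive integer vectors `a₁, a₂` intersect trivially if and only if there are
integer vectors `a₃, …, a_k` such that the `k×k` integer matrix with columns
`a₁, …, a_k` has determinant `±1`. -/
theorem circleSubgroups_inf_eq_bot_iff_exists_unimodular_extension
    (k : ℕ) (hk : 2 ≤ k) (a₁ a₂ : Fin k → ℤ)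
    (h₁ : Finset.univ.gcd a₁ = 1) (h₂ : Finset.univ.gcd a₂ = 1) :
    circleSubgroup a₁ ⊓ circleSubgroup a₂ = ⊥ ↔
      ∃ A : Matrix (Fin k) (Fin k) ℤ,
        (∀ i, A i ⟨0, by omega⟩ = a₁ i) ∧ (∀ i, A i ⟨1, by omega⟩ = a₂ i) ∧
        (A.det = 1 ∨ A.det = -1) := by
  constructor
  · intro h
    obtain ⟨A, hA, hA₁, hA₂⟩ := exists_unimodular_of_circleSubgroup_inf_eq_bot hk h h₁ h₂
    exact ⟨A, hA₁, hA₂, Int.isUnit_iff.mp hA⟩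
  · rintro ⟨A, hA₁, hA₂, hdet⟩
    obtain ⟨c, hc₁, hc₂⟩ := Matrix.exists_dotProduct_col_eq_one_and_eq_zero
      (Int.isUnit_iff.mpr hdet) (j₀ := ⟨0, by omega⟩) (j₁ := ⟨1, by omega⟩) (by simp)
    simp only [hA₁, hA₂] at hc₁ hc₂
    exact circleSubgroup_inf_eq_bot_of_dotProduct_eq hc₁ hc₂
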